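/- Let d ≥ 3 be odd, let Σ be the d×d skew-symmetric matrix of the context, and define 𝒜(x) := d (1+|x|²)^{−2} ((1−|x|²) e_1 + 2 x_1 x + 2 Σ x). Then |𝒜(x)| = d/(1+|x|²) for every x ∈ ℝ^d, and consequently ‖𝒜‖_{L^d(ℝ^d)}² = d² (∫_{ℝ^d} (1+|x|²)^{−d} dx)^{2/d} = (d²/4)·|𝕊^d|^{2/d} = (d/(d−2))·S_d. -/

import Mathlib

open MeasureTheory Complex Filter ENNReal

noncomputable section

/-- `ℝ^d` with the Euclidean norm. -/
abbrev ESp (d : ℕ) := EuclideanSpace ℝ (Fin d)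

/-- The skew-symmetric `d×d` matrix `Σ`: block diagonal with a `1×1` zero block
followed by `(d-1)/2` blocks `((0,-1),(1,0))` (0-based indices: `Σ_{j,j+1} = -1`,
`Σ_{j+1,j} = 1` for odd `j`). -/
def SigmaMat (d : ℕ) : Matrix (Fin d) (Fin d) ℝ :=
  Matrix.of fun j k =>
    if Odd (j : ℕ) ∧ (k : ℕ) = (j : ℕ) + 1 then -1
    else if Odd (k : ℕ) ∧ (j : ℕ) = (k : ℕ) + 1 then 1
    else 0

/-- The vector field `𝒜(x) = d(1+|x|²)^{-2}((1-|x|²)e₁ + 2x₁x + 2Σx)`. -/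
def curlyA (d : ℕ) (x : ESp d) : ESp d :=
  (WithLp.equiv 2 (∀ _ : Fin d, ℝ)).symm fun k =>
    (d : ℝ) * ((1 + ‖x‖ ^ 2) ^ 2)⁻¹ *
      ((if (k : ℕ) = 0 then 1 - ‖x‖ ^ 2 else 0)
        + 2 * x ⟨0, lt_of_le_of_lt (Nat.zero_le (k : ℕ)) k.isLt⟩ * x k
        + 2 * ((SigmaMat d).mulVec (fun j => x j)) k)

/-- Surface measure of the unit sphere `𝕊^d ⊂ ℝ^{d+1}`. -/
def sphereVol (d : ℕ) : ℝ :=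
  ((d : ℝ) + 1) * (volume (Metric.ball (0 : EuclideanSpace ℝ (Fin (d+1))) 1)).toReal

/-- The sharp Sobolev constant `S_d = (d(d-2)/4)·|𝕊^d|^{2/d}`. -/
def Sd (d : ℕ) : ℝ :=
  ((d : ℝ) * ((d : ℝ) - 2) / 4) * sphereVol d ^ ((2 : ℝ) / (d : ℝ))

/-! `𝒜(x) = d (1+|x|²)⁻² v` with `v = (1-|x|²) e₁ + 2 x₁ x + 2 Σx`. Since `Σ` is skew, `Σx ⊥ x`;
its first row vanishes, so `Σx ⊥ e₁`; and for odd `d` it permutes the coordinates `2, …, d` up to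
sign, so `|Σx|² = |x|² - x₁²`. Expanding `|v|²` then gives `(1+|x|²)²`.

Hence `‖𝒜‖_{L^d} = d (∫ (1+|x|²)^{-d})^{1/d}`. In polar coordinates and after the
substitutions `u = y²`, `u = t/(1-t)` the integral becomes a Beta integral,
`π^{d/2} Γ(d/2) / Γ(d)`, and Legendre's duplication formula identifies this with
`|𝕊^d| / 2^d = π^{(d+1)/2} / (2^{d-1} Γ((d+1)/2))`. -/

open Set
open scoped Real RealInnerProductSpace Matrix

theorem Matrix.dotProduct_mulVec_self_eq_zero_of_transpose_eq_neg {n R : Type*} [Fintype n]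
    [CommRing R] [NoZeroDivisors R] [CharZero R] {A : Matrix n n R} (hA : Aᵀ = -A) (x : n → R) :
    x ⬝ᵥ (A *ᵥ x) = 0 := by
  refine CharZero.eq_neg_self_iff.mp ?_
  conv_lhs => rw [Matrix.dotProduct_mulVec, ← Matrix.mulVec_transpose, hA, dotProduct_comm]
  rw [Matrix.neg_mulVec, dotProduct_neg]

theorem norm_one_sub_smul_add_smul_add_two_smul {E : Type*} [NormedAddCommGroup E]
    [InnerProductSpace ℝ E] {e x s : E} (he : ‖e‖ = 1) (hes : ⟪e, s⟫ = 0) (hxs : ⟪x, s⟫ = 0)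
    (hs : ‖s‖ ^ 2 = ‖x‖ ^ 2 - ⟪e, x⟫ ^ 2) :
    ‖(1 - ‖x‖ ^ 2) • e + (2 * ⟪e, x⟫) • x + (2 : ℝ) • s‖ = 1 + ‖x‖ ^ 2 := by
  rw [← sq_eq_sq₀ (norm_nonneg _) (by positivity), ← real_inner_self_eq_norm_sq]
  simp only [inner_add_left, inner_add_right, real_inner_smul_left, real_inner_smul_right]
  simp only [real_inner_self_eq_norm_sq, real_inner_comm e, real_inner_comm x s, hes, hxs, he]
  linear_combination 4 * hs

section SigmaMat

variable {d : ℕ}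

/-- `k - 1` truncates, so `0` is a fixed point. -/
def pairSwap (hodd : Odd d) (k : Fin d) : Fin d :=
  if h : Odd (k : ℕ) then
    ⟨k + 1, by obtain ⟨m, hm⟩ := h; obtain ⟨n, hn⟩ := hodd; have := k.isLt; omega⟩
  else ⟨k - 1, by omega⟩

def pairSign (k : Fin d) : ℝ :=
  if Odd (k : ℕ) then -1 else if (k : ℕ) = 0 then 0 else 1

theorem pairSwap_val (hodd : Odd d) (k : Fin d) :
    (pairSwap hodd k : ℕ) = if Odd (k : ℕ) then (k : ℕ) + 1 else (k : ℕ) - 1 := by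
  unfold pairSwap; split_ifs <;> rfl

theorem pairSwap_involutive (hodd : Odd d) : Function.Involutive (pairSwap hodd) := by
  intro k
  ext
  rw [pairSwap_val, pairSwap_val]
  simp only [Nat.odd_iff]
  split_ifs <;> omega

theorem pairSign_pairSwap (hodd : Odd d) (k : Fin d) :
    pairSign (pairSwap hodd k) = -pairSign k := by
  unfold pairSign
  rw [pairSwap_val]
  simp only [Nat.odd_iff]
  split_ifs <;> norm_num <;> omega

theorem pairSign_sq (k : Fin d) : pairSign k ^ 2 = if (k : ℕ) = 0 then 0 else 1 := by
  unfold pairSign; split_ifs <;> simp_all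

theorem SigmaMat_apply (hodd : Odd d) (k j : Fin d) :
    SigmaMat d k j = pairSign k * if j = pairSwap hodd k then 1 else 0 := by
  simp only [SigmaMat, Matrix.of_apply, pairSign, Fin.ext_iff, pairSwap_val, Nat.odd_iff]
  split_ifs <;> first | omega | norm_num

theorem SigmaMat_mulVec_apply (hodd : Odd d) (x : Fin d → ℝ) (k : Fin d) :
    (SigmaMat d *ᵥ x) k = pairSign k * x (pairSwap hodd k) := by
  simp [Matrix.mulVec, dotProduct, SigmaMat_apply hodd]

theorem SigmaMat_transpose (d : ℕ) : (SigmaMat d)ᵀ = -SigmaMat d := by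
  ext j k
  simp only [SigmaMat, Matrix.transpose_apply, Matrix.of_apply, Matrix.neg_apply,
    Nat.odd_iff]
  split_ifs <;> first | omega | norm_num

theorem SigmaMat_mulVec_apply_zero (hd : 0 < d) (x : Fin d → ℝ) :
    (SigmaMat d *ᵥ x) ⟨0, hd⟩ = 0 := by
  simp [Matrix.mulVec, dotProduct, SigmaMat]

theorem sum_sq_SigmaMat_mulVec (hodd : Odd d) (x : Fin d → ℝ) :
    ∑ k, (SigmaMat d *ᵥ x) k ^ 2 = ∑ k, x k ^ 2 - x ⟨0, hodd.pos⟩ ^ 2 := by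
  have hswap : ∑ k, (SigmaMat d *ᵥ x) k ^ 2 = ∑ k, pairSign k ^ 2 * x k ^ 2 := by
    simp only [SigmaMat_mulVec_apply hodd, mul_pow]
    refine Fintype.sum_equiv (pairSwap_involutive hodd).toPerm _ _ fun k => ?_
    simp [pairSign_pairSwap]
  rw [hswap, eq_sub_iff_add_eq, ← Fintype.sum_ite_eq' ⟨0, hodd.pos⟩ (fun k => x k ^ 2),
    ← Finset.sum_add_distrib]
  refine Finset.sum_congr rfl fun k _ => ?_
  simp only [pairSign_sq, Fin.ext_iff]
  split_ifs <;> simp_all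

theorem inner_toEuclideanLin_SigmaMat_self (x : ESp d) :
    ⟪x, Matrix.toEuclideanLin (SigmaMat d) x⟫ = 0 := by
  rw [EuclideanSpace.inner_eq_star_dotProduct, star_trivial, dotProduct_comm]
  exact Matrix.dotProduct_mulVec_self_eq_zero_of_transpose_eq_neg (SigmaMat_transpose d) _

theorem inner_single_zero_toEuclideanLin_SigmaMat (hd : 0 < d) (x : ESp d) :
    ⟪EuclideanSpace.single ⟨0, hd⟩ 1, Matrix.toEuclideanLin (SigmaMat d) x⟫ = 0 := by
  simpa [EuclideanSpace.inner_single_left] using SigmaMat_mulVec_apply_zero hd x.ofLp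

theorem norm_toEuclideanLin_SigmaMat_sq (hodd : Odd d) (x : ESp d) :
    ‖Matrix.toEuclideanLin (SigmaMat d) x‖ ^ 2
      = ‖x‖ ^ 2 - ⟪EuclideanSpace.single ⟨0, hodd.pos⟩ 1, x⟫ ^ 2 := by
  simpa [EuclideanSpace.real_norm_sq_eq, EuclideanSpace.inner_single_left]
    using sum_sq_SigmaMat_mulVec hodd x.ofLp

end SigmaMat

section curlyA

variable {d : ℕ}

theorem curlyA_eq_smul (hd : 0 < d) (x : ESp d) :
    curlyA d x = ((d : ℝ) * ((1 + ‖x‖ ^ 2) ^ 2)⁻¹) •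
      ((1 - ‖x‖ ^ 2) • EuclideanSpace.single ⟨0, hd⟩ 1
        + (2 * ⟪EuclideanSpace.single ⟨0, hd⟩ 1, x⟫) • x
        + (2 : ℝ) • Matrix.toEuclideanLin (SigmaMat d) x) := by
  ext k
  simp [curlyA, EuclideanSpace.inner_single_left, Fin.ext_iff]
  split_ifs <;> ring

theorem norm_curlyA (hodd : Odd d) (x : ESp d) :
    ‖curlyA d x‖ = d / (1 + ‖x‖ ^ 2) := by
  have hR : 0 < 1 + ‖x‖ ^ 2 := by positivity
  rw [curlyA_eq_smul hodd.pos, norm_smul, norm_one_sub_smul_add_smul_add_two_smul (by simp)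
    (inner_single_zero_toEuclideanLin_SigmaMat _ x) (inner_toEuclideanLin_SigmaMat_self x)
    (norm_toEuclideanLin_SigmaMat_sq hodd x), Real.norm_of_nonneg (by positivity)]
  field_simp

end curlyA

section BetaIntegrals

variable {a b : ℝ}

theorem intervalIntegral_rpow_mul_one_sub_rpow (ha : 0 < a) (hb : 0 < b) :
    ∫ x in (0 : ℝ)..1, x ^ (a - 1) * (1 - x) ^ (b - 1)
      = Real.Gamma a * Real.Gamma b / Real.Gamma (a + b) := by
  have hbeta : Complex.betaIntegral a b
      = ((∫ x in (0 : ℝ)..1, x ^ (a - 1) * (1 - x) ^ (b - 1) : ℝ) : ℂ) := by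
    rw [Complex.betaIntegral, ← intervalIntegral.integral_ofReal]
    refine intervalIntegral.integral_congr fun x hx => ?_
    rw [uIcc_of_le zero_le_one, mem_Icc] at hx
    push_cast
    rw [Complex.ofReal_cpow hx.1, Complex.ofReal_cpow (sub_nonneg.mpr hx.2)]
    push_cast
    ring
  have h := Complex.Gamma_mul_Gamma_eq_betaIntegral (s := a) (t := b)
    (by simpa using ha) (by simpa using hb)
  rw [hbeta, ← Complex.ofReal_add, Complex.Gamma_ofReal, Complex.Gamma_ofReal,
    Complex.Gamma_ofReal, ← Complex.ofReal_mul, ← Complex.ofReal_mul,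
    Complex.ofReal_inj] at h
  rw [eq_div_iff (Real.Gamma_pos_of_pos (add_pos ha hb)).ne', h, mul_comm]

theorem image_div_one_sub_Ioo : (fun x : ℝ => x / (1 - x)) '' Ioo 0 1 = Ioi 0 := by
  ext u
  constructor
  · rintro ⟨x, ⟨hx0, hx1⟩, rfl⟩
    exact div_pos hx0 (sub_pos.mpr hx1)
  · intro (hu : 0 < u)
    refine ⟨u / (1 + u), ⟨by positivity, (div_lt_one (by positivity)).mpr (by linarith)⟩, ?_⟩
    field_simp
    ring

theorem integral_Ioi_rpow_mul_one_add_rpow_neg (ha : 0 < a) (hb : 0 < b) :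
    ∫ u in Ioi (0 : ℝ), u ^ (a - 1) * (1 + u) ^ (-(a + b))
      = Real.Gamma a * Real.Gamma b / Real.Gamma (a + b) := by
  have hderiv : ∀ x ∈ Ioo (0 : ℝ) 1,
      HasDerivWithinAt (fun x : ℝ => x / (1 - x)) ((1 - x) ^ 2)⁻¹ (Ioo 0 1) x := by
    intro x ⟨_, hx1⟩
    refine (((hasDerivAt_id' x).div ((hasDerivAt_id' x).const_sub 1)
      (sub_pos.mpr hx1).ne').hasDerivWithinAt).congr_deriv ?_
    ring
  have hinj : InjOn (fun x : ℝ => x / (1 - x)) (Ioo 0 1) := by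
    intro x ⟨_, hx1⟩ y ⟨_, hy1⟩ h
    have := (sub_pos.mpr hx1).ne'
    have := (sub_pos.mpr hy1).ne'
    field_simp at h
    linarith
  have hintegrand : ∀ x ∈ Ioo (0 : ℝ) 1,
      |((1 - x) ^ 2)⁻¹| • ((x / (1 - x)) ^ (a - 1) * (1 + x / (1 - x)) ^ (-(a + b)))
        = x ^ (a - 1) * (1 - x) ^ (b - 1) := by
    intro x ⟨hx0, hx1⟩
    have hx1' : 0 < 1 - x := sub_pos.mpr hx1
    have hsum : 1 + x / (1 - x) = (1 - x)⁻¹ := by field_simp; ring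
    rw [hsum, smul_eq_mul, abs_of_pos (by positivity), Real.div_rpow hx0.le hx1'.le,
      Real.inv_rpow hx1'.le, ← Real.rpow_neg hx1'.le, neg_neg, div_eq_mul_inv,
      ← Real.rpow_neg hx1'.le, ← Real.rpow_two, ← Real.rpow_neg hx1'.le]
    calc (1 - x) ^ (-2 : ℝ) * (x ^ (a - 1) * (1 - x) ^ (-(a - 1)) * (1 - x) ^ (a + b))
        = x ^ (a - 1) * ((1 - x) ^ (-2 : ℝ) * (1 - x) ^ (-(a - 1)) * (1 - x) ^ (a + b)) := by
          ring
      _ = x ^ (a - 1) * (1 - x) ^ (b - 1) := by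
          rw [← Real.rpow_add hx1', ← Real.rpow_add hx1']
          ring_nf
  rw [← image_div_one_sub_Ioo, integral_image_eq_integral_abs_deriv_smul measurableSet_Ioo
    hderiv hinj, setIntegral_congr_fun measurableSet_Ioo hintegrand,
    ← integral_Ioc_eq_integral_Ioo, ← intervalIntegral.integral_of_le zero_le_one]
  exact intervalIntegral_rpow_mul_one_sub_rpow ha hb

theorem integral_Ioi_rpow_mul_one_add_sq_rpow_neg (ha : 0 < a) (hb : 0 < b) :
    ∫ y in Ioi (0 : ℝ), y ^ (2 * a - 1) * (1 + y ^ 2) ^ (-(a + b))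
      = Real.Gamma a * Real.Gamma b / (2 * Real.Gamma (a + b)) := by
  have hsubst := integral_comp_rpow_Ioi_of_pos
    (g := fun u => u ^ (a - 1) * (1 + u) ^ (-(a + b))) two_pos
  have hintegrand : ∀ y ∈ Ioi (0 : ℝ),
      ((2 : ℝ) * y ^ ((2 : ℝ) - 1)) • ((y ^ (2 : ℝ)) ^ (a - 1) * (1 + y ^ (2 : ℝ)) ^ (-(a + b)))
        = 2 * (y ^ (2 * a - 1) * (1 + y ^ 2) ^ (-(a + b))) := by
    intro y (hy : 0 < y)
    have hpow : y ^ ((2 : ℝ) - 1) * (y ^ (2 : ℝ)) ^ (a - 1) = y ^ (2 * a - 1) := by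
      rw [← Real.rpow_mul hy.le, ← Real.rpow_add hy]
      ring_nf
    rw [smul_eq_mul, Real.rpow_two, ← hpow, Real.rpow_two]
    ring
  rw [setIntegral_congr_fun measurableSet_Ioi hintegrand, integral_const_mul,
    integral_Ioi_rpow_mul_one_add_rpow_neg ha hb] at hsubst
  rw [mul_comm 2 (Real.Gamma _), ← div_div, ← hsubst]
  ring

end BetaIntegrals

section JapaneseBracket

open Module

variable {E : Type*} [NormedAddCommGroup E] [InnerProductSpace ℝ E] [FiniteDimensional ℝ E]
  [MeasurableSpace E] [BorelSpace E] [Nontrivial E]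

theorem integral_one_add_norm_sq_rpow_neg {s : ℝ} (hs : finrank ℝ E / 2 < s) :
    ∫ x : E, (1 + ‖x‖ ^ 2) ^ (-s)
      = √π ^ finrank ℝ E * Real.Gamma (s - finrank ℝ E / 2) / Real.Gamma s := by
  set n := finrank ℝ E
  have hn : 0 < n := finrank_pos
  have hradial : ∫ y in Ioi (0 : ℝ), y ^ (n - 1) • (1 + y ^ 2) ^ (-s)
      = Real.Gamma (n / 2) * Real.Gamma (s - n / 2) / (2 * Real.Gamma s) := by
    have h := integral_Ioi_rpow_mul_one_add_sq_rpow_neg (a := n / 2) (b := s - n / 2)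
      (by positivity) (by linarith)
    rw [add_sub_cancel] at h
    rw [← h]
    refine setIntegral_congr_fun measurableSet_Ioi fun y _ => ?_
    rw [smul_eq_mul, ← Real.rpow_natCast, Nat.cast_sub hn, mul_div_cancel₀ _ two_ne_zero,
      Nat.cast_one]
  have hball : volume.real (Metric.ball (0 : E) 1) = √π ^ n / Real.Gamma (n / 2 + 1) := by
    rw [measureReal_def, InnerProductSpace.volume_ball, ENNReal.ofReal_one, one_pow, one_mul,
      ENNReal.toReal_ofReal (by positivity)]
  rw [integral_fun_norm_addHaar volume (fun r => (1 + r ^ 2) ^ (-s)), hradial, hball,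
    Real.Gamma_add_one (by positivity), nsmul_eq_mul, smul_eq_mul]
  have : 0 < Real.Gamma (n / 2) := Real.Gamma_pos_of_pos (by positivity)
  change (n : ℝ) * _ = _
  field_simp

end JapaneseBracket

theorem sphereVol_eq (d : ℕ) : sphereVol d = 2 * √π ^ (d + 1) / Real.Gamma ((d + 1) / 2) := by
  have hΓ : 0 < Real.Gamma ((d + 1) / 2) := Real.Gamma_pos_of_pos (by positivity)
  rw [sphereVol, EuclideanSpace.volume_ball, Fintype.card_fin, ENNReal.ofReal_one, one_pow,
    one_mul, ENNReal.toReal_ofReal (by positivity), Nat.cast_add_one,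
    Real.Gamma_add_one (by positivity)]
  field_simp

theorem integral_one_add_norm_sq_rpow_neg_eq_sphereVol {d : ℕ} (hd : 0 < d) :
    ∫ x : ESp d, (1 + ‖x‖ ^ 2) ^ (-(d : ℝ)) = sphereVol d / 2 ^ d := by
  have : Nontrivial (ESp d) := Module.nontrivial_of_finrank_pos (R := ℝ) (by simpa using hd)
  have hd' : (0 : ℝ) < d := by exact_mod_cast hd
  rw [integral_one_add_norm_sq_rpow_neg (by simpa using hd'), finrank_euclideanSpace_fin,
    sphereVol_eq, show (d : ℝ) - d / 2 = d / 2 by ring]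
  have hdup := Real.Gamma_mul_Gamma_add_half (d / 2)
  rw [mul_div_cancel₀ _ two_ne_zero, ← add_div] at hdup
  have hpow : (2 : ℝ) ^ (1 - (d : ℝ)) * 2 ^ d = 2 := by
    rw [← Real.rpow_natCast, ← Real.rpow_add two_pos, sub_add_cancel, Real.rpow_one]
  have : 0 < Real.Gamma ((d + 1) / 2) := Real.Gamma_pos_of_pos (by positivity)
  have : 0 < Real.Gamma d := Real.Gamma_pos_of_pos hd'
  field_simp
  linear_combination (√π ^ d * 2 ^ d) * hdup + (√π ^ (d + 1) * Real.Gamma d) * hpow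

theorem toReal_eLpNorm_of_norm_eq_div_one_add_norm_sq {E F : Type*} [NormedAddCommGroup E]
    [MeasurableSpace E] [OpensMeasurableSpace E] [NormedAddCommGroup F] (μ : Measure E)
    {f : E → F} {c : ℝ} (hc : 0 ≤ c) {p : ℝ≥0∞} (hp0 : p ≠ 0) (hp : p ≠ ∞)
    (hf : ∀ x, ‖f x‖ = c / (1 + ‖x‖ ^ 2)) :
    (eLpNorm f p μ).toReal = c * (∫ x, (1 + ‖x‖ ^ 2) ^ (-p.toReal) ∂μ) ^ p.toReal⁻¹ := by
  have hp' : 0 < p.toReal := ENNReal.toReal_pos hp0 hp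
  have hg : Continuous fun x : E => c / (1 + ‖x‖ ^ 2) :=
    continuous_const.div (by fun_prop) fun x => by positivity
  have hpow : ∀ x : E,
      ‖c / (1 + ‖x‖ ^ 2)‖ ^ p.toReal = c ^ p.toReal * (1 + ‖x‖ ^ 2) ^ (-p.toReal) := fun x => by
    rw [Real.norm_of_nonneg (by positivity), Real.div_rpow hc (by positivity),
        Real.rpow_neg (by positivity), div_eq_mul_inv]
  rw [eLpNorm_congr_norm_ae (g := fun x => c / (1 + ‖x‖ ^ 2))
      (ae_of_all _ fun x => by rw [hf, Real.norm_of_nonneg (by positivity)]),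
    toReal_eLpNorm hg.aestronglyMeasurable,
    lpNorm_eq_integral_norm_rpow_toReal hp0 hp hg.aestronglyMeasurable]
  simp_rw [hpow]
  rw [integral_const_mul, Real.mul_rpow (by positivity) (integral_nonneg fun x => by positivity),
    ← Real.rpow_mul hc, mul_inv_cancel₀ hp'.ne', Real.rpow_one]

/-- `|𝒜(x)| = d/(1+|x|²)`, and the `L^d` norm of `𝒜` saturates the
bound: `‖𝒜‖_{L^d}² = d²(∫(1+|x|²)^{-d})^{2/d} = (d²/4)|𝕊^d|^{2/d} = (d/(d-2))S_d`. -/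
theorem curlyA_norm_and_Lp_norm
    (d : ℕ) (hd : 3 ≤ d) (hodd : Odd d) :
    (∀ x : ESp d, ‖curlyA d x‖ = (d : ℝ) / (1 + ‖x‖ ^ 2))
    ∧ (eLpNorm (curlyA d) (d : ℝ≥0∞) volume).toReal ^ 2
        = (d : ℝ) ^ 2 * (∫ x : ESp d, (1 + ‖x‖ ^ 2) ^ (-(d : ℝ))) ^ ((2 : ℝ) / (d : ℝ))
    ∧ (d : ℝ) ^ 2 * (∫ x : ESp d, (1 + ‖x‖ ^ 2) ^ (-(d : ℝ))) ^ ((2 : ℝ) / (d : ℝ))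
        = ((d : ℝ) ^ 2 / 4) * sphereVol d ^ ((2 : ℝ) / (d : ℝ))
    ∧ ((d : ℝ) ^ 2 / 4) * sphereVol d ^ ((2 : ℝ) / (d : ℝ))
        = ((d : ℝ) / ((d : ℝ) - 2)) * Sd d := by
  have hd' : (3 : ℝ) ≤ d := by exact_mod_cast hd
  have hI : 0 ≤ ∫ x : ESp d, (1 + ‖x‖ ^ 2) ^ (-(d : ℝ)) := integral_nonneg fun x => by positivity
  have hsphere : 0 ≤ sphereVol d := by rw [sphereVol]; positivity
  have hfour : ((2 : ℝ) ^ d) ^ ((2 : ℝ) / d) = 4 := by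
    rw [← Real.rpow_natCast, ← Real.rpow_mul zero_le_two, mul_div_cancel₀ _ (by positivity)]
    norm_num
  refine ⟨norm_curlyA hodd, ?_, ?_, ?_⟩
  · rw [toReal_eLpNorm_of_norm_eq_div_one_add_norm_sq volume (Nat.cast_nonneg d)
      (Nat.cast_ne_zero.mpr (by omega)) (by simp) (norm_curlyA hodd), ENNReal.toReal_natCast,
      mul_pow, ← Real.rpow_mul_natCast hI]
    ring_nf
  · rw [integral_one_add_norm_sq_rpow_neg_eq_sphereVol (by omega),
      Real.div_rpow hsphere (by positivity), hfour]
    ring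
  · rw [Sd]
    field_simp [show (d : ℝ) - 2 ≠ 0 by linarith]
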